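/- arXiv:2405.07112 — 2 statements merged into one kernel-verified Lean document; each statement's English description precedes it below -/
import Mathlib

section
/- Let p ≥ q > 0 be natural numbers and S a family of sets with the (p,q)-property such that for every finite subfamily F ⊆ S with the (p,q)-property, F has a transversal of size at most n. Then for every natural number q' > 0, setting p' = n(q'-1)+1, the family S has the (p',q')-property. -/
/-!
Given `n (q' - 1) + 1` sets of `S`, they form a finite subfamily which inherits the
`(p,q)`-property, hence has a transversal of at most `n` points. By pigeonhole one of these
points lies in at least `q'` of the sets.
-/

/-- A family `S` has the `(p,q)`-property if among any `p` distinct sets of `S` there are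
`q` with nonempty intersection. -/
def HasPQProperty {α : Type*} (S : Set (Set α)) (p q : ℕ) : Prop :=
  ∀ T ⊆ S, T.Finite → T.ncard = p →
    ∃ G ⊆ T, G.ncard = q ∧ (⋂₀ G).Nonempty

open Finset in
theorem Finset.exists_lt_card_filter_of_mul_lt_card {α β : Type*} [DecidableEq β] {k : ℕ}
    {w : Finset α} {t : Finset β} (r : α → β → Prop) [DecidableRel r]
    (hcover : ∀ b ∈ t, ∃ a ∈ w, r a b) (hcard : #w * k < #t) :
    ∃ a ∈ w, k < #{b ∈ t | r a b} := by
  by_contra! hle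
  have ht : t ⊆ w.biUnion fun a => {b ∈ t | r a b} := fun b hb => by
    obtain ⟨a, haw, hab⟩ := hcover b hb
    exact mem_biUnion.2 ⟨a, haw, mem_filter.2 ⟨hb, hab⟩⟩
  exact (card_le_card ht |>.trans (card_biUnion_le_card_mul _ _ _ hle)).not_gt hcard

theorem HasPQProperty.mono {α : Type*} {S S' : Set (Set α)} {p q : ℕ}
    (hS : HasPQProperty S p q) (hS' : S' ⊆ S) : HasPQProperty S' p q :=
  fun T hT => hS T (hT.trans hS')

theorem exists_sInter_nonempty_of_transversal {α : Type*} {T : Set (Set α)} {W : Set α} {k : ℕ}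
    (hT : T.Finite) (hW : W.Finite) (hmeet : ∀ A ∈ T, (A ∩ W).Nonempty)
    (hcard : W.ncard * k < T.ncard) : ∃ G ⊆ T, G.ncard = k + 1 ∧ (⋂₀ G).Nonempty := by
  classical
  lift T to Finset (Set α) using hT
  lift W to Finset α using hW
  simp only [Set.ncard_coe_finset] at hcard
  obtain ⟨x, -, hx⟩ := Finset.exists_lt_card_filter_of_mul_lt_card (· ∈ ·)
    (fun A hA => (hmeet A hA).imp fun x hx => ⟨hx.2, hx.1⟩) hcard
  obtain ⟨G, hGsub, hGcard⟩ := Finset.exists_subset_card_eq hx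
  refine ⟨G, fun A hA => (Finset.mem_filter.1 (hGsub hA)).1, by simpa using hGcard, x, ?_⟩
  exact fun A hA => (Finset.mem_filter.1 (hGsub hA)).2

theorem stmt_6_general {α : Type*} (S : Set (Set α)) (p q n : ℕ)
    (hS : HasPQProperty S p q)
    (htrans : ∀ F ⊆ S, F.Finite → HasPQProperty F p q →
      ∃ T : Set α, T.Finite ∧ T.ncard ≤ n ∧ ∀ A ∈ F, (A ∩ T).Nonempty) :
    ∀ q' : ℕ, 0 < q' → HasPQProperty S (n * (q' - 1) + 1) q' := by
  intro q' hq' T hTS hTfin hTcard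
  obtain ⟨k, rfl⟩ := Nat.exists_eq_add_one_of_ne_zero hq'.ne'
  obtain ⟨W, hWfin, hWcard, hWmeet⟩ := htrans T hTS hTfin (hS.mono hTS)
  refine exists_sInter_nonempty_of_transversal hTfin hWfin hWmeet ?_
  rw [hTcard, Nat.add_sub_cancel]
  exact Nat.lt_succ_of_le (Nat.mul_le_mul_right k hWcard)

/-- Combinatorial core of Corollary 3.2: if `S` has the `(p,q)`-property and every finite
subfamily of `S` with the `(p,q)`-property has a transversal of size at most `n`, then for
every `q' > 0` the family `S` has the `(n(q'-1)+1, q')`-property. -/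
theorem stmt_6 {α : Type*} (S : Set (Set α)) (p q n : ℕ)
    (hq : 0 < q) (hpq : q ≤ p)
    (hS : HasPQProperty S p q)
    (htrans : ∀ F ⊆ S, F.Finite → HasPQProperty F p q →
      ∃ T : Set α, T.Finite ∧ T.ncard ≤ n ∧ ∀ A ∈ F, (A ∩ T).Nonempty) :
    ∀ q' : ℕ, 0 < q' → HasPQProperty S (n * (q' - 1) + 1) q' :=
  stmt_6_general S p q n hS htrans
end

section
/- In the topological space X = { (x,y) ∈ ℝ² : y < x } with the topology τ̃ generated by the sets A(x',x'',x''',y',y'',y''') (for y' < y'' < y''' < x' < x'' < x'''), every singleton is closed, i.e., τ̃ is T1. -/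
/-- The half-plane below the diagonal. -/
def HalfPlane : Type := {p : ℝ × ℝ // p.2 < p.1}

/-- The basic open set `A(x',x'',x''',y',y'',y''')` of Example 5.15. -/
def basicSet (x' x'' x''' y' y'' y''' : ℝ) : Set HalfPlane :=
  {p | (p.val.2 < y' ∧ p.val.2 < p.val.1) ∨
    (y'' < p.val.2 ∧ p.val.2 < y''' ∧
      ((p.val.2 < p.val.1 ∧ p.val.1 < y''') ∨
       (x' < p.val.1 ∧ p.val.1 < x'') ∨
       x''' < p.val.1))}

/-- The topology `τ̃` generated by the sets `A(x',x'',x''',y',y'',y''')` for parameters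
`y' < y'' < y''' < x' < x'' < x'''`. -/
def tauTilde : TopologicalSpace HalfPlane :=
  TopologicalSpace.generateFrom
    {S | ∃ x' x'' x''' y' y'' y''' : ℝ,
      y' < y'' ∧ y'' < y''' ∧ y''' < x' ∧ x' < x'' ∧ x'' < x''' ∧
      S = basicSet x' x'' x''' y' y'' y'''}

/-!
Distinct points are separated by a single basic set containing the first but not the second.
A lower point is caught by the half-plane part `y < y'` below the upper one; a higher point by a
strip `y'' < y < y'''` above the lower one. For two points at the same height, the strip through
them separates them with the triangle part `x < y'''` when the first lies to the left, and with
the part `x''' < x` when it lies to the right.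
-/

open Topology

namespace HalfPlane

lemma isOpen_basicSet {x' x'' x''' y' y'' y''' : ℝ} (h₁ : y' < y'') (h₂ : y'' < y''')
    (h₃ : y''' < x') (h₄ : x' < x'') (h₅ : x'' < x''') :
    IsOpen[tauTilde] (basicSet x' x'' x''' y' y'' y''') :=
  .basic _ ⟨_, _, _, _, _, _, h₁, h₂, h₃, h₄, h₅, rfl⟩

variable {a b c d : ℝ}

lemma exists_isOpen_of_snd_lt (hp : b < a) (hq : d < c) (h : d < b) :
    ∃ U, IsOpen[tauTilde] U ∧ (⟨(c, d), hq⟩ : HalfPlane) ∈ U ∧ ⟨(a, b), hp⟩ ∉ U := by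
  refine ⟨basicSet (b + 3) (b + 4) (b + 5) ((d + b) / 2) (b + 1) (b + 2),
    isOpen_basicSet (by linarith) (by linarith) (by linarith) (by linarith) (by linarith),
    Or.inl ⟨by linarith, hq⟩, ?_⟩
  rintro (⟨h', -⟩ | ⟨h', -⟩) <;> dsimp only at h' <;> linarith

lemma exists_isOpen_of_lt_snd (hp : b < a) (hq : d < c) (h : b < d) :
    ∃ U, IsOpen[tauTilde] U ∧ (⟨(c, d), hq⟩ : HalfPlane) ∈ U ∧ ⟨(a, b), hp⟩ ∉ U := by
  refine ⟨basicSet (c + 2) (c + 3) (c + 4) (b - 1) ((b + d) / 2) (c + 1),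
    isOpen_basicSet (by linarith) (by linarith) (by linarith) (by linarith) (by linarith),
    Or.inr ⟨by linarith, by linarith, Or.inl ⟨hq, by linarith⟩⟩, ?_⟩
  rintro (⟨h', -⟩ | ⟨h', -⟩) <;> dsimp only at h' <;> linarith

lemma exists_isOpen_of_fst_lt (hp : b < a) (hq : b < c) (h : c < a) :
    ∃ U, IsOpen[tauTilde] U ∧ (⟨(c, b), hq⟩ : HalfPlane) ∈ U ∧ ⟨(a, b), hp⟩ ∉ U := by
  refine ⟨basicSet (a + 1) (a + 2) (a + 3) (b - 2) (b - 1) ((c + a) / 2),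
    isOpen_basicSet (by linarith) (by linarith) (by linarith) (by linarith) (by linarith),
    Or.inr ⟨by linarith, by linarith, Or.inl ⟨hq, by linarith⟩⟩, ?_⟩
  rintro (⟨h', -⟩ | ⟨-, -, ⟨-, h'⟩ | ⟨h', -⟩ | h'⟩) <;> dsimp only at h' <;> linarith

lemma exists_isOpen_of_lt_fst (hp : b < a) (hq : b < c) (h : a < c) :
    ∃ U, IsOpen[tauTilde] U ∧ (⟨(c, b), hq⟩ : HalfPlane) ∈ U ∧ ⟨(a, b), hp⟩ ∉ U := by
  refine ⟨basicSet ((3 * a + c) / 4) ((a + c) / 2) ((a + 3 * c) / 4) (b - 2) (b - 1)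
      ((a + b) / 2),
    isOpen_basicSet (by linarith) (by linarith) (by linarith) (by linarith) (by linarith),
    Or.inr ⟨by linarith, by linarith, Or.inr (Or.inr (by linarith))⟩, ?_⟩
  rintro (⟨h', -⟩ | ⟨-, -, ⟨-, h'⟩ | ⟨h', -⟩ | h'⟩) <;> dsimp only at h' <;> linarith

lemma t1Space_tauTilde : @T1Space HalfPlane tauTilde := by
  refine (@t1Space_iff_exists_open _ tauTilde).2 fun ⟨(c, d), hq⟩ ⟨(a, b), hp⟩ hne => ?_
  rcases lt_trichotomy d b with h | rfl | h
  · exact exists_isOpen_of_snd_lt hp hq h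
  · have hca : c ≠ a := fun h' => hne (by subst h'; rfl)
    rcases hca.lt_or_gt with h | h
    · exact exists_isOpen_of_fst_lt hp hq h
    · exact exists_isOpen_of_lt_fst hp hq h
  · exact exists_isOpen_of_lt_snd hp hq h

end HalfPlane

/-- The topology `τ̃` is T1: every singleton is closed. -/
theorem stmt_18 :
    ∀ p : HalfPlane, @IsClosed HalfPlane tauTilde {p} :=
  fun _ => @isClosed_singleton _ tauTilde HalfPlane.t1Space_tauTilde _
end
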